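/- arXiv:2510.07245 — 3 statements merged into one kernel-verified Lean document; each statement's English description precedes it below -/
import Mathlib

section
/- In the secret-sharing teacher class construction with parameter d: for all integers k,d ≥ 1, every L ≥ 4(k+1)d, and every (possibly randomized) DFF algorithm 𝒜, the expected worst-case mistake count against an adaptive adversary satisfies M^L_k(𝒜, 𝒯^{d+1}, H_•) ≥ (k+1)d − 1. -/
open scoped Classical

/-- A teacher over examples `X`, labels `Y` and Boolean features `Φ`:
a labeling function together with a feature-feedback function that, whenever
two examples receive different labels, returns a feature of `Φ` satisfied by
the first example and not by the second. -/
structure Teacher (X Y : Type) (Φ : Set (X → Bool)) where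
  label : X → Y
  feedback : X → X → Option (X → Bool)
  feedback_spec : ∀ x xh : X, label x ≠ label xh →
    ∃ φ ∈ Φ, feedback x xh = some φ ∧ φ x = true ∧ φ xh = false

/-- A teacher is consistent with a history `H` of labeled examples. -/
def ConsistentH {X Y : Type} {Φ : Set (X → Bool)} (T : Teacher X Y Φ)
    (H : Set (X × Y)) : Prop :=
  ∀ p ∈ H, T.label p.1 = p.2

/-- Restriction of a teacher class by one round of DFF interaction: the
teachers that label `x` with `y` and give feature feedback `φ` on `(x, xh)`. -/
def TRestrict {X Y : Type} {Φ : Set (X → Bool)} (𝒯 : Set (Teacher X Y Φ))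
    (x xh : X) (y : Y) (φ : X → Bool) : Set (Teacher X Y Φ) :=
  {T | T ∈ 𝒯 ∧ T.label x = y ∧ T.feedback x xh = some φ}

/-- `ShatteredDFFT Φ 𝒯 H d` holds iff there is a DFF tree of height `d`
shattered by the teacher class `𝒯` and the history `H`: at a leaf, some
teacher of the current class is consistent with the accumulated history
(i.e. every root-to-leaf path of the tree is consistent with some teacher of
the original class that is consistent with the original history); at an inner
node a next example `x` is presented, and for every available explanation
pair `(xh, yh)` (an element of the history or a labeled example revealed
along the path, all of which are accumulated in `H`) there is teacher
feedback `(y, φ)` with `y ≠ yh` and `φ ∈ Φ` leading to a shattered subtree of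
height `d` for the correspondingly restricted class and extended history. -/
inductive ShatteredDFFT {X Y : Type} (Φ : Set (X → Bool)) :
    Set (Teacher X Y Φ) → Set (X × Y) → ℕ → Prop
  | leaf (𝒯 : Set (Teacher X Y Φ)) (H : Set (X × Y))
      (h : ∃ T ∈ 𝒯, ConsistentH T H) : ShatteredDFFT Φ 𝒯 H 0
  | node (𝒯 : Set (Teacher X Y Φ)) (H : Set (X × Y)) (d : ℕ) (x : X)
      (y : X × Y → Y) (φ : X × Y → (X → Bool))
      (hne : ∀ p ∈ H, y p ≠ p.2) (hΦ : ∀ p ∈ H, φ p ∈ Φ)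
      (h : ∀ p ∈ H,
        ShatteredDFFT Φ (TRestrict 𝒯 x p.1 (y p) (φ p)) (insert (x, y p) H) d) :
      ShatteredDFFT Φ 𝒯 H (d + 1)

/-- The DFF dimension of a teacher class `𝒯` with history `H`: the maximal
height of a DFF tree shattered by `𝒯` and `H` (possibly infinite). -/
noncomputable def DFFdim {X Y : Type} (Φ : Set (X → Bool))
    (𝒯 : Set (Teacher X Y Φ)) (H : Set (X × Y)) : ℕ∞ :=
  sSup {d : ℕ∞ | ∃ n : ℕ, d = n ∧ ShatteredDFFT Φ 𝒯 H n}

/-- A transcript of the (possibly non-realizable) DFF protocol: each entry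
records the presented example `x`, the explanation `xh` and prediction `yh`
output by the learner, and, on a mistake round, the revealed label and
feature `(y, φ)` (with `y ≠ yh`); on a correct round the feedback is `none`. -/
abbrev ATranscript (X Y : Type) : Type :=
  List (X × X × Y × Option (Y × (X → Bool)))

/-- The labeled examples revealed by a transcript: on a correct round the
prediction is revealed to be the label, and on a mistake round the label is
revealed by the feedback. -/
def revealedA {X Y : Type} (tr : ATranscript X Y) : Set (X × Y) :=
  {p | ∃ e ∈ tr, e.1 = p.1 ∧
    ((e.2.2.2 = none ∧ e.2.2.1 = p.2) ∨ ∃ φ, e.2.2.2 = some (p.2, φ))}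

/-- The number of mistake rounds of a transcript. -/
def mistakesA {X Y : Type} (tr : ATranscript X Y) : ℕ :=
  tr.countP fun e => e.2.2.2.isSome

/-- Consistency of a single round with a teacher: on a correct round the
teacher labels the example by the prediction; on a mistake round the revealed
label and feature are those given by the teacher. -/
def RoundCons {X Y : Type} {Φ : Set (X → Bool)} (T : Teacher X Y Φ)
    (e : X × X × Y × Option (Y × (X → Bool))) : Prop :=
  match e.2.2.2 with
  | none => T.label e.1 = e.2.2.1
  | some (y, φ) => T.label e.1 = y ∧ T.feedback e.1 e.2.1 = some φ

/-- A transcript of length `L` is `k`-consistent with `(𝒯, H)` if some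
teacher of `𝒯` consistent with `H` is consistent with every round outside a
set of at most `k` exception rounds. -/
def kConsistent {X Y : Type} {Φ : Set (X → Bool)} (𝒯 : Set (Teacher X Y Φ))
    (H : Set (X × Y)) (k : ℕ) (tr : ATranscript X Y) : Prop :=
  ∃ T ∈ 𝒯, ConsistentH T H ∧ ∃ E : Finset ℕ, E.card ≤ k ∧
    ∀ (t : ℕ) (h : t < tr.length), t ∉ E → RoundCons T (tr.get ⟨t, h⟩)

open scoped ENNReal
/-- A randomized DFF algorithm: given the transcript so far and the next
example, a probability distribution over pairs of an explanation and a
predicted label. -/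
abbrev RandAlg (X Y : Type) : Type := ATranscript X Y → X → PMF (X × Y)

/-- An adaptive adversary: as a function of the transcript so far, choose
the next example, its revealed label, and the feature-feedback function to
be used on this round. -/
abbrev Adversary (X Y : Type) : Type :=
  ATranscript X Y → X × Y × (X → X → (X → Bool))

/-- The distribution over `n`-round transcripts generated by the interaction
of a randomized algorithm `A` with an adaptive adversary `adv`: in each round
the adversary picks `(x, y, ψ)` from the transcript so far, the algorithm
samples `(xh, yh)`, and on a mistake (`yh ≠ y`) the feedback `(y, ψ x xh)` is
appended. -/
noncomputable def runPMF {X Y : Type} (A : RandAlg X Y) (adv : Adversary X Y) :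
    ℕ → PMF (ATranscript X Y)
  | 0 => PMF.pure []
  | n + 1 => (runPMF A adv n).bind fun tr =>
      (A tr (adv tr).1).bind fun p =>
        PMF.pure (tr ++ [((adv tr).1, p.1, p.2,
          if p.2 = (adv tr).2.1 then none
          else some ((adv tr).2.1, (adv tr).2.2 (adv tr).1 p.1))])

/-- The expected number of mistakes of the randomized algorithm `A` against
the adaptive adversary `adv` over `L` rounds. -/
noncomputable def expMistakes {X Y : Type} (A : RandAlg X Y)
    (adv : Adversary X Y) (L : ℕ) : ℝ≥0∞ :=
  ∑' tr : ATranscript X Y, runPMF A adv L tr * (mistakesA tr : ℝ≥0∞)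

/-- A randomized algorithm is legal for history `H` if, with probability one,
the pair it outputs is an element of `H` or a previously revealed labeled
example. -/
def LegalRand {X Y : Type} (A : RandAlg X Y) (H : Set (X × Y)) : Prop :=
  ∀ (tr : ATranscript X Y) (x : X), ∀ p ∈ (A tr x).support,
    p ∈ H ∪ revealedA tr

/-- The expected worst-case number of mistakes of a randomized algorithm in
the `k`-non-realizable setting over `L` rounds: the supremum of the expected
number of mistakes over all adaptive adversaries that, with probability one,
generate transcripts `k`-consistent with some teacher of `𝒯` consistent with
`H`. -/
noncomputable def MLk {X Y : Type} {Φ : Set (X → Bool)} (A : RandAlg X Y)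
    (𝒯 : Set (Teacher X Y Φ)) (H : Set (X × Y)) (k L : ℕ) : ℝ≥0∞ :=
  ⨆ adv ∈ {adv : Adversary X Y |
      ∀ tr ∈ (runPMF A adv L).support, kConsistent 𝒯 H k tr},
    expMistakes A adv L

/-- The block `X_i = {2^i, …, 2^{i+1} − 1}` of the secret-sharing
construction. -/
def XiSS (i : ℕ) : Set ℕ := Set.Ico (2 ^ i) (2 ^ (i + 1))

/-- The labeling functions of the secret-sharing construction on block `i`:
all `f : ℕ → {0,1}` with `f 1 = 1` and `f x = 0` outside `X_i ∪ {1}`. -/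
def FdiSS (i : ℕ) : Set (ℕ → Bool) :=
  {f | f 1 = true ∧ ∀ x : ℕ, x ∉ XiSS i → x ≠ 1 → f x = false}

/-- The constant term (the secret) of a coefficient vector of a
degree-`(d−1)` secret-sharing polynomial. -/
noncomputable def constTerm {d p : ℕ} (c : Fin d → ZMod p) : ZMod p :=
  ∑ j : Fin d, c j * (0 : ZMod p) ^ (j : ℕ)

/-- The shifted secret-sharing polynomial
`P[c̄](x) = 2^{i+1} + ((Σ_j c_j (x − 2^i + 1)^j) mod p)`. -/
noncomputable def PpolySS (d i p : ℕ) (c : Fin d → ZMod p) (x : ℕ) : ℕ :=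
  2 ^ (i + 1) + (∑ j : Fin d, c j * ((x - 2 ^ i + 1 : ℕ) : ZMod p) ^ (j : ℕ)).val

/-- The indicator feature of a pair of natural numbers. -/
noncomputable def ind2 (a b : ℕ) : ℕ → Bool := fun z => decide (z = a ∨ z = b)

/-- The indicator feature of a single natural number. -/
noncomputable def ind1 (a : ℕ) : ℕ → Bool := fun z => decide (z = a)

/-- The feature-feedback function `ψ^f_ā` of the secret-sharing construction:
on a pair of examples in `X_i` it reveals, besides `x` itself, one evaluation
of the secret-sharing polynomial with coefficients `ā(xh, f(x))`; otherwise
it is the indicator of `x`. -/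
noncomputable def psiSS (d i p : ℕ) (a : ℕ → Bool → Fin d → ZMod p)
    (f : ℕ → Bool) : ℕ → ℕ → Option (ℕ → Bool) :=
  fun x xh =>
    if x ∈ XiSS i ∧ xh ∈ XiSS i then some (ind2 x (PpolySS d i p (a xh (f x)) x))
    else some (ind1 x)

/-- The teacher class `𝒯^d_i` of the secret-sharing construction with
parameter `d`, block `i`, prime `p` and secret-encoding `b`: teachers with a
labeling function `f ∈ F^d_i` and feedback `ψ^f_ā` where, for every `xh ∈ X_i`
with `f xh = 1`, the secret of `ā(xh, 0)` is `b f`. -/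
noncomputable def TdISS (d i p : ℕ) (b : (ℕ → Bool) → ZMod p) :
    Set (Teacher ℕ Bool (Set.univ : Set (ℕ → Bool))) :=
  {T | ∃ f ∈ FdiSS i, ∃ a : ℕ → Bool → Fin d → ZMod p,
    (∀ xh ∈ XiSS i, f xh = true → constTerm (a xh false) = b f) ∧
    T.label = f ∧ T.feedback = psiSS d i p a f}

/-- The teacher class `𝒯^{d+1} = ⋃_i 𝒯^d_i` of the secret-sharing
construction. -/
noncomputable def TfullSS (d : ℕ) (p : ℕ → ℕ)
    (b : ∀ i : ℕ, (ℕ → Bool) → ZMod (p i)) :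
    Set (Teacher ℕ Bool (Set.univ : Set (ℕ → Bool))) :=
  ⋃ i : ℕ, TdISS d i (p i) (b i)

/-- The history `H_• = {(2, 0), (1, 1)}`. -/
def HbulSS : Set (ℕ × Bool) := {((2 : ℕ), false), ((1 : ℕ), true)}


/-!
The adversary presents the fresh examples `2^i, 2^i + 1, …` of the block `X_i`, `i = L + 2`, and
labels each one against the learner's more likely prediction, so that every round is a mistake
with probability at least `1/2`. On explanations from `X_i` its feature is `𝕀[x, 2^{i+1}]`, i.e.
it reveals the value `0` of the secret-sharing polynomial. A false positive (prediction `1`,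
label `0`) explained by `x̂` forces the teacher's polynomial `P[ā(x̂, 0)]`, whose constant term is
the secret `b f`, to vanish at the code `x - 2^i + 1` of the presented example, and a polynomial
of degree `< d` can absorb `d - 1` such zeros. So the adversary labels `0` only while the capped
count `Σ_x̂ min(#false positives explained by x̂, d)` is below `B = (k+1)d - 1`; the examples `x̂`
with `d` false positives are relabelled `0`, and the at most `B / d < k + 1` rounds presenting
them are the exceptions. By legality every explanation of a false positive was revealed with
label `1`, so once the budget is used up, at least `k` examples carry label `1`.

Backward induction over the rounds shows that, with `G` mistakes so far and `n` rounds to go,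
`2^n · 2G + Σ_j C(n,j) min(r, 2j) ≤ 2^n · 2 𝔼[final mistakes]` for
`r = 2(B - capped count) + (k - #labels 1)`: in a round labelled `0`, `r` drops by `2` only on a
mistake, in a round labelled `1` it drops by `1`, and `r = 0` once the budget is used up. At the
start, `Σ_j C(L,j) min(2B + k, 2j) ≥ 2B · 2^L` because `L ≥ 4(k+1)d`, by the second moment of
`Bin(L, 1/2)`.
-/

namespace PMF

variable {α β : Type*}

theorem tsum_pure_mul (a : α) (g : α → ℝ≥0∞) : ∑' b, pure a b * g b = g a := by
  simp [pure_apply]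

theorem tsum_bind_mul (p : PMF α) (f : α → PMF β) (g : β → ℝ≥0∞) :
    ∑' b, p.bind f b * g b = ∑' a, p a * ∑' b, f a b * g b := by
  simp_rw [bind_apply, ← ENNReal.tsum_mul_right, ← ENNReal.tsum_mul_left, mul_assoc]
  exact ENNReal.tsum_comm

theorem tsum_map_mul (f : α → β) (p : PMF α) (g : β → ℝ≥0∞) :
    ∑' b, p.map f b * g b = ∑' a, p a * g (f a) := by
  simp only [map, tsum_bind_mul, Function.comp_apply, tsum_pure_mul]

end PMF

theorem ENNReal.le_two_mul_add_mul {α β x y z : ℝ≥0∞} (hsum : α + β = 1) (hβα : β ≤ α)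
    (hyx : y ≤ x) (hz : z ≤ x + y) : z ≤ 2 * (α * x + β * y) := by
  obtain ⟨δ, rfl⟩ := exists_add_of_le hyx
  calc z ≤ y + δ + y := hz
    _ = (α + β) * δ + 2 * y := by rw [hsum]; ring
    _ ≤ (α + α) * δ + 2 * y := by gcongr
    _ = 2 * α * δ + 2 * (α + β) * y := by rw [hsum]; ring
    _ = 2 * (α * (y + δ) + β * y) := by ring

theorem PMF.natCast_le_two_mul_tsum_snd {X : Type*} (P : PMF (X × Bool)) (y : Bool)
    {s : Bool → ℕ} {z : ℕ} (hs : s y ≤ s (!y))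
    (h : z ≤ 2 * s y ∨ (P.map Prod.snd y ≤ P.map Prod.snd (!y) ∧ z ≤ s (!y) + s y)) :
    (z : ℝ≥0∞) ≤ 2 * ∑' q, P q * s q.2 := by
  set Q := P.map Prod.snd
  have hsum : Q (!y) + Q y = 1 := by
    have := Q.tsum_coe
    rw [tsum_bool] at this
    cases y <;> simpa [add_comm] using this
  have hE : ∑' q, P q * s q.2 = Q (!y) * s (!y) + Q y * s y := by
    rw [← PMF.tsum_map_mul Prod.snd P fun b => (s b : ℝ≥0∞), tsum_bool]
    cases y <;> simp [Q, add_comm]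
  rw [hE]
  rcases h with h | ⟨hQ, h⟩
  · calc (z : ℝ≥0∞) ≤ 2 * s y := by exact_mod_cast h
      _ = 2 * ((Q (!y) + Q y) * s y) := by rw [hsum, one_mul]
      _ ≤ 2 * (Q (!y) * s (!y) + Q y * s y) := by
          rw [add_mul]
          gcongr
  · exact ENNReal.le_two_mul_add_mul hsum hQ (by exact_mod_cast hs) (by exact_mod_cast h)

section Protocol

variable {X Y : Type}

abbrev Round (X Y : Type) : Type := X × X × Y × Option (Y × (X → Bool))

def revealedLabel (e : Round X Y) : Y :=
  match e.2.2.2 with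
  | some yφ => yφ.1
  | none => e.2.2.1

theorem mem_revealedA_iff {tr : ATranscript X Y} {p : X × Y} :
    p ∈ revealedA tr ↔ ∃ e ∈ tr, e.1 = p.1 ∧ revealedLabel e = p.2 := by
  refine exists_congr fun e => and_congr_right fun _ => and_congr_right fun _ => ?_
  rcases e with ⟨x, xh, yh, _ | ⟨y, φ⟩⟩ <;> simp [revealedLabel, eq_comm]

theorem revealedA_subset_append (tr l : ATranscript X Y) : revealedA tr ⊆ revealedA (tr ++ l) :=
  fun _ ⟨e, he, h⟩ => ⟨e, List.mem_append_left l he, h⟩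

theorem mistakesA_append_singleton (tr : ATranscript X Y) (e : Round X Y) :
    mistakesA (tr ++ [e]) = mistakesA tr + e.2.2.2.isSome.toNat := by
  cases h : e.2.2.2.isSome <;> simp [mistakesA, List.countP_append, h]

theorem kConsistent.mono {Φ : Set (X → Bool)} {𝒯 𝒯' : Set (Teacher X Y Φ)} {H : Set (X × Y)}
    {k : ℕ} {tr : ATranscript X Y} (h : kConsistent 𝒯 H k tr) (h𝒯 : 𝒯 ⊆ 𝒯') :
    kConsistent 𝒯' H k tr :=
  let ⟨T, hT, hrest⟩ := h
  ⟨T, h𝒯 hT, hrest⟩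

theorem kConsistent_of_nodup {Φ : Set (X → Bool)} {𝒯 : Set (Teacher X Y Φ)} {H : Set (X × Y)}
    {k : ℕ} {tr : ATranscript X Y} (hnodup : (tr.map Prod.fst).Nodup) {T : Teacher X Y Φ}
    (hT : T ∈ 𝒯) (hH : ConsistentH T H) (S : Finset X) (hS : S.card ≤ k)
    (hround : ∀ e ∈ tr, e.1 ∉ S → RoundCons T e) : kConsistent 𝒯 H k tr := by
  refine ⟨T, hT, hH, S.image fun x => (tr.map Prod.fst).idxOf x, Finset.card_image_le.trans hS,
    fun t ht htE => hround _ (List.get_mem _ _) fun hmem => htE ?_⟩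
  refine Finset.mem_image.2 ⟨_, hmem, ?_⟩
  have := hnodup.idxOf_getElem t (by simpa using ht)
  rwa [List.getElem_map] at this

variable (A : RandAlg X Y) (adv : Adversary X Y)

noncomputable def roundEntry (tr : ATranscript X Y) (q : X × Y) : Round X Y :=
  ((adv tr).1, q.1, q.2,
    if q.2 = (adv tr).2.1 then none else some ((adv tr).2.1, (adv tr).2.2 (adv tr).1 q.1))

theorem runPMF_succ (n : ℕ) :
    runPMF A adv (n + 1) =
      (runPMF A adv n).bind fun tr => (A tr (adv tr).1).map fun q => tr ++ [roundEntry adv tr q] :=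
  rfl

theorem tsum_runPMF_succ_mul (n : ℕ) (g : ATranscript X Y → ℝ≥0∞) :
    ∑' tr, runPMF A adv (n + 1) tr * g tr =
      ∑' tr, runPMF A adv n tr * ∑' q, A tr (adv tr).1 q * g (tr ++ [roundEntry adv tr q]) := by
  simp only [runPMF_succ, PMF.tsum_bind_mul, PMF.tsum_map_mul]

theorem runPMF_support_induction {motive : ℕ → ATranscript X Y → Prop} (nil : motive 0 [])
    (snoc : ∀ n tr, motive n tr → ∀ q ∈ (A tr (adv tr).1).support,
      motive (n + 1) (tr ++ [roundEntry adv tr q]))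
    {n : ℕ} {tr : ATranscript X Y} (h : tr ∈ (runPMF A adv n).support) : motive n tr := by
  induction n generalizing tr with
  | zero =>
    rw [runPMF, PMF.mem_support_pure_iff] at h
    exact h ▸ nil
  | succ n ih =>
    rw [runPMF_succ, PMF.mem_support_bind_iff] at h
    obtain ⟨tr, htr, h⟩ := h
    obtain ⟨q, hq, rfl⟩ := (PMF.mem_support_map_iff _ _ _).1 h
    exact snoc n tr (ih htr) q hq

variable {A adv}

theorem revealedLabel_roundEntry (tr : ATranscript X Y) (q : X × Y) :
    revealedLabel (roundEntry adv tr q) = (adv tr).2.1 := by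
  by_cases h : q.2 = (adv tr).2.1 <;> simp [revealedLabel, roundEntry, h]

theorem isSome_roundEntry [DecidableEq Y] (tr : ATranscript X Y) (q : X × Y) :
    (roundEntry adv tr q).2.2.2.isSome = decide (q.2 ≠ (adv tr).2.1) := by
  by_cases h : q.2 = (adv tr).2.1 <;> simp [roundEntry, h]

theorem roundCons_roundEntry_iff {Φ : Set (X → Bool)} (T : Teacher X Y Φ) (tr : ATranscript X Y)
    (q : X × Y) :
    RoundCons T (roundEntry adv tr q) ↔ T.label (adv tr).1 = (adv tr).2.1 ∧
      (q.2 ≠ (adv tr).2.1 → T.feedback (adv tr).1 q.1 = some ((adv tr).2.2 (adv tr).1 q.1)) := by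
  by_cases h : q.2 = (adv tr).2.1 <;> simp [RoundCons, roundEntry, h]

theorem length_of_mem_support_runPMF {n : ℕ} {tr : ATranscript X Y}
    (h : tr ∈ (runPMF A adv n).support) : tr.length = n :=
  runPMF_support_induction A adv (motive := fun n tr => tr.length = n) rfl
    (fun _ _ ih _ _ => by simp [ih]) h

theorem exists_roundEntry_of_mem_support_runPMF {n : ℕ} {tr : ATranscript X Y}
    (h : tr ∈ (runPMF A adv n).support) : ∀ e ∈ tr, ∃ tr' q, e = roundEntry adv tr' q :=
  runPMF_support_induction A adv
    (motive := fun _ tr => ∀ e ∈ tr, ∃ tr' q, e = roundEntry adv tr' q)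
    (by simp) (fun _ tr ih q _ e he => by
      rcases List.mem_append.1 he with he | he
      · exact ih e he
      · exact ⟨tr, q, List.mem_singleton.1 he⟩) h

theorem map_fst_eq_range'_of_mem_support_runPMF {s : ℕ} {A : RandAlg ℕ Y} {adv : Adversary ℕ Y}
    (hx : ∀ tr, (adv tr).1 = s + tr.length) {n : ℕ} {tr : ATranscript ℕ Y}
    (h : tr ∈ (runPMF A adv n).support) : tr.map Prod.fst = List.range' s tr.length :=
  runPMF_support_induction A adv (motive := fun _ tr => tr.map Prod.fst = List.range' s tr.length)
    rfl (fun _ tr ih q _ => by simp [List.range'_concat, ih, roundEntry, hx]) h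

theorem legal_of_mem_support_runPMF {H : Set (X × Y)} (hA : LegalRand A H) {n : ℕ}
    {tr : ATranscript X Y} (h : tr ∈ (runPMF A adv n).support) :
    ∀ e ∈ tr, (e.2.1, e.2.2.1) ∈ H ∪ revealedA tr :=
  runPMF_support_induction A adv
    (motive := fun _ tr => ∀ e ∈ tr, (e.2.1, e.2.2.1) ∈ H ∪ revealedA tr)
    (by simp) (fun _ tr ih q hq e he => by
      refine Set.union_subset_union_right H (revealedA_subset_append _ _) ?_
      rcases List.mem_append.1 he with he | he
      · exact ih e he
      · exact List.mem_singleton.1 he ▸ hA tr _ q hq) h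

theorem le_pow_mul_tsum_runPMF_of_step (c : ℝ≥0∞) (g : ATranscript X Y → ℝ≥0∞)
    (Φ : ℕ → ATranscript X Y → ℝ≥0∞) (h0 : ∀ tr, Φ 0 tr ≤ g tr)
    (hstep : ∀ n m tr, tr ∈ (runPMF A adv n).support →
      Φ (m + 1) tr ≤ c * ∑' q, A tr (adv tr).1 q * Φ m (tr ++ [roundEntry adv tr q]))
    (L : ℕ) : Φ L [] ≤ c ^ L * ∑' tr, runPMF A adv L tr * g tr := by
  have key : ∀ n m, Φ (m + n) [] ≤ c ^ n * ∑' tr, runPMF A adv n tr * Φ m tr := by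
    intro n
    induction n with
    | zero => intro m; simp [runPMF]
    | succ n ih =>
      intro m
      calc Φ (m + (n + 1)) [] = Φ (m + 1 + n) [] := by rw [add_right_comm, add_assoc]
        _ ≤ c ^ n * ∑' tr, runPMF A adv n tr * Φ (m + 1) tr := ih (m + 1)
        _ ≤ c ^ n * ∑' tr, runPMF A adv n tr *
              (c * ∑' q, A tr (adv tr).1 q * Φ m (tr ++ [roundEntry adv tr q])) := by
          refine mul_le_mul_right (ENNReal.tsum_le_tsum fun tr => ?_) _
          by_cases htr : tr ∈ (runPMF A adv n).support
          · exact mul_le_mul_right (hstep n m tr htr) _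
          · simp [(PMF.apply_eq_zero_iff _ _).2 htr]
        _ = c ^ (n + 1) * ∑' tr, runPMF A adv (n + 1) tr * Φ m tr := by
          simp_rw [tsum_runPMF_succ_mul, mul_left_comm _ c, ENNReal.tsum_mul_left, pow_succ,
            mul_assoc]
  calc Φ L [] ≤ c ^ L * ∑' tr, runPMF A adv L tr * Φ 0 tr := by simpa using key L 0
    _ ≤ _ := by gcongr with tr; exact h0 tr

end Protocol

section BinomialPotential

open Finset

/-- `binomPotential n r = 2^n 𝔼[min(r, 2J)]` for `J ∼ Bin(n, 1/2)`. -/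
def binomPotential (n r : ℕ) : ℕ := ∑ j ∈ range (n + 1), n.choose j * min r (2 * j)

theorem binomPotential_zero_left (r : ℕ) : binomPotential 0 r = 0 := by simp [binomPotential]

theorem binomPotential_zero_right (n : ℕ) : binomPotential n 0 = 0 := by simp [binomPotential]

theorem binomPotential_mono (n : ℕ) : Monotone (binomPotential n) := fun _ _ h =>
  sum_le_sum fun _ _ => Nat.mul_le_mul_left _ (min_le_min_right _ h)

theorem binomPotential_succ (n r : ℕ) :
    binomPotential (n + 1) r =
      ∑ j ∈ range (n + 1), n.choose j * (min r (2 * j) + min r (2 * j + 2)) := by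
  have := sum_choose_succ_mul (R := ℕ) (fun j _ => min r (2 * j)) n
  simp only [Nat.cast_id] at this
  simp only [binomPotential, this, mul_add, ← sum_add_distrib]

theorem sum_range_choose_mul_le_add {n c : ℕ} {f g : ℕ → ℕ} (h : ∀ j, f j ≤ g j + c) :
    ∑ j ∈ range (n + 1), n.choose j * f j ≤
      ∑ j ∈ range (n + 1), n.choose j * g j + c * 2 ^ n := by
  rw [← Nat.sum_range_choose, mul_sum, ← sum_add_distrib]
  exact sum_le_sum fun j _ => by rw [mul_comm c, ← mul_add]; exact Nat.mul_le_mul_left _ (h j)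

theorem binomPotential_le_sub_two (n r : ℕ) :
    binomPotential n r ≤ binomPotential n (r - 2) + 2 * 2 ^ n :=
  sum_range_choose_mul_le_add fun j => by omega

theorem binomPotential_succ_le (n r : ℕ) :
    binomPotential (n + 1) r ≤ binomPotential n r + binomPotential n (r - 2) + 2 * 2 ^ n := by
  rw [binomPotential_succ, binomPotential, binomPotential, ← sum_add_distrib]
  simp only [← mul_add]
  exact sum_range_choose_mul_le_add fun j => by omega

theorem binomPotential_succ_le_two_mul (n r : ℕ) :
    binomPotential (n + 1) r ≤ 2 * binomPotential n (r - 1) + 2 * 2 ^ n := by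
  rw [binomPotential_succ, binomPotential, mul_sum]
  simp only [mul_left_comm 2]
  exact sum_range_choose_mul_le_add fun j => by omega

theorem sum_range_choose_mul_sub_two_mul_sq (n : ℕ) :
    ∑ j ∈ range (n + 1), (n.choose j : ℤ) * ((n : ℤ) - 2 * j) ^ 2 = (n : ℤ) * 2 ^ n := by
  induction n with
  | zero => simp
  | succ n ih =>
    have hpascal := sum_choose_succ_mul (R := ℤ) (fun j _ => (((n + 1 : ℕ) : ℤ) - 2 * j) ^ 2) n
    have hchoose : ∑ j ∈ range (n + 1), (n.choose j : ℤ) = 2 ^ n := by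
      exact_mod_cast Nat.sum_range_choose n
    rw [show n + 1 + 1 = n + 2 from rfl, hpascal, ← sum_add_distrib]
    calc ∑ j ∈ range (n + 1), ((n.choose j : ℤ) * (((n + 1 : ℕ) : ℤ) - 2 * j) ^ 2 +
            (n.choose j : ℤ) * (((n + 1 : ℕ) : ℤ) - 2 * ((j + 1 : ℕ) : ℤ)) ^ 2)
        = ∑ j ∈ range (n + 1),
            (2 * ((n.choose j : ℤ) * ((n : ℤ) - 2 * j) ^ 2) + 2 * (n.choose j : ℤ)) :=
          sum_congr rfl fun j _ => by push_cast; ring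
      _ = ((n + 1 : ℕ) : ℤ) * 2 ^ (n + 1) := by
          rw [sum_add_distrib, ← mul_sum, ← mul_sum, ih, hchoose]
          push_cast
          ring

theorem two_mul_mul_two_pow_le_binomPotential {B k L : ℕ} (hk : 1 ≤ k)
    (hL : 8 * B + 4 * k ≤ 3 * L) : 2 * B * 2 ^ L ≤ binomPotential L (2 * B + k) := by
  set r := 2 * B + k
  set S := ∑ j ∈ range (L + 1), L.choose j * (r - 2 * j)
  have hsplit : r * 2 ^ L ≤ binomPotential L r + S := by
    calc r * 2 ^ L = ∑ j ∈ range (L + 1), L.choose j * r := by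
          rw [← Nat.sum_range_choose, mul_sum]; simp only [mul_comm]
      _ ≤ ∑ j ∈ range (L + 1), L.choose j * (min r (2 * j) + (r - 2 * j)) :=
          sum_le_sum fun j _ => Nat.mul_le_mul_left _ (by omega)
      _ = binomPotential L r + S := by simp only [mul_add, sum_add_distrib, binomPotential, S]
  set μ := L - r
  have hμ : L ≤ 4 * μ := by omega
  have hμpos : 0 < 4 * μ := by omega
  -- `4 μ (r - 2j)⁺ ≤ (L - 2j)²` is AM-GM, as `μ + (r - 2j) = L - 2j`.
  have hmoment : 4 * μ * S ≤ L * 2 ^ L := by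
    have hμz : (μ : ℤ) = L - r := by omega
    suffices (4 * μ * S : ℤ) ≤ L * 2 ^ L by exact_mod_cast this
    simp only [S, Nat.cast_sum, mul_sum, ← sum_range_choose_mul_sub_two_mul_sq]
    refine sum_le_sum fun j _ => ?_
    rcases le_or_gt (2 * j) r with hj | hj
    · have hcast : ((r - 2 * j : ℕ) : ℤ) = r - 2 * j := by omega
      rw [Nat.cast_mul, hcast, hμz]
      nlinarith [sq_nonneg ((L : ℤ) - r - (r - 2 * j)), (L.choose j).cast_nonneg (α := ℤ)]
    · rw [Nat.cast_mul, show r - 2 * j = 0 by omega]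
      simp only [Nat.cast_zero, mul_zero]
      positivity
  have hS : S ≤ k * 2 ^ L := by
    refine Nat.le_of_mul_le_mul_left (c := 4 * μ) ?_ hμpos
    calc 4 * μ * S ≤ L * 2 ^ L := hmoment
      _ ≤ 4 * μ * k * 2 ^ L := Nat.mul_le_mul_right _ (hμ.trans (Nat.le_mul_of_pos_right _ hk))
      _ = 4 * μ * (k * 2 ^ L) := by ring
  have hr : r * 2 ^ L = 2 * B * 2 ^ L + k * 2 ^ L := by simp only [r, add_mul]
  omega

end BinomialPotential

open Polynomial in
theorem exists_coeffs_eval_zero_and_eval_eq_zero {K : Type*} [Field K] {d : ℕ} (S : Finset K)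
    (h0 : (0 : K) ∉ S) (hcard : S.card < d) (s : K) :
    ∃ c : Fin d → K, ∑ j : Fin d, c j * 0 ^ (j : ℕ) = s ∧
      ∀ w ∈ S, ∑ j : Fin d, c j * w ^ (j : ℕ) = 0 := by
  set Q : K[X] := C (s * (∏ w ∈ S, -w)⁻¹) * ∏ w ∈ S, (X - C w)
  have hdeg : Q.natDegree < d :=
    (natDegree_C_mul_le _ _).trans_lt (by rwa [natDegree_finsetProd_X_sub_C_eq_card])
  have heval : ∀ w, ∑ j : Fin d, Q.coeff j * w ^ (j : ℕ) = Q.eval w := fun w => by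
    rw [eval_eq_sum_range' hdeg, Fin.sum_univ_eq_sum_range (fun j => Q.coeff j * w ^ j)]
  have hprod : ∏ w ∈ S, -w ≠ 0 :=
    Finset.prod_ne_zero_iff.2 fun w hw => neg_ne_zero.2 (ne_of_mem_of_not_mem hw h0)
  refine ⟨fun j => Q.coeff j, ?_, fun w hw => ?_⟩
  · rw [heval]
    simp [Q, eval_prod, mul_assoc, inv_mul_cancel₀ hprod]
  · rw [heval]
    simp only [Q, eval_mul, eval_C, eval_prod, eval_sub, eval_X]
    rw [Finset.prod_eq_zero hw (sub_self w), mul_zero]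

namespace SecretSharing

open Finset

def falsePositive (e : Round ℕ Bool) : Bool := e.2.2.1 && !revealedLabel e

def falsePositiveCount (z : ℕ) (tr : ATranscript ℕ Bool) : ℕ :=
  tr.countP fun e => falsePositive e && decide (e.2.1 = z)

def trueCount (tr : ATranscript ℕ Bool) : ℕ := tr.countP revealedLabel

def cappedCount (d i : ℕ) (tr : ATranscript ℕ Bool) : ℕ :=
  ∑ z ∈ Ico (2 ^ i) (2 ^ (i + 1)), min (falsePositiveCount z tr) d

def burned (d i : ℕ) (tr : ATranscript ℕ Bool) : Finset ℕ :=
  (Ico (2 ^ i) (2 ^ (i + 1))).filter fun z => d ≤ falsePositiveCount z tr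

def budget (k d : ℕ) : ℕ := (k + 1) * d - 1

def remaining (k d i : ℕ) (tr : ATranscript ℕ Bool) : ℕ :=
  2 * (budget k d - cappedCount d i tr) + (k - trueCount tr)

theorem ne_one_of_mem_XiSS {i z : ℕ} (hi : 1 ≤ i) (hz : z ∈ XiSS i) : z ≠ 1 := by
  have := hz.1
  have : 2 ≤ 2 ^ i := Nat.le_self_pow (by omega) 2
  omega

noncomputable def advFeature (i : ℕ) : ℕ → ℕ → ℕ → Bool := fun x xh =>
  if x ∈ XiSS i ∧ xh ∈ XiSS i then ind2 x (2 ^ (i + 1)) else ind1 x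

noncomputable def adversary (k d i : ℕ) (A : RandAlg ℕ Bool) : Adversary ℕ Bool := fun tr =>
  (2 ^ i + tr.length,
    if cappedCount d i tr < budget k d ∧
        (A tr (2 ^ i + tr.length)).map Prod.snd false ≤
          (A tr (2 ^ i + tr.length)).map Prod.snd true
      then false else true,
    advFeature i)

def potential (k d i m : ℕ) (tr : ATranscript ℕ Bool) : ℕ :=
  2 ^ m * (2 * mistakesA tr) + binomPotential m (remaining k d i tr)

/-- Bounds `potential k d i m` from below after a round with label `y` and prediction `b`
(`stepBound_le_potential`). -/
def stepBound (m G r : ℕ) (y b : Bool) : ℕ :=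
  2 ^ m * (2 * (G + (decide (b ≠ y)).toNat)) +
    binomPotential m (r - (2 * (b && !y).toNat + y.toNat))

theorem stepBound_le_stepBound_not (m G r : ℕ) (y : Bool) :
    stepBound m G r y y ≤ stepBound m G r y (!y) := by
  cases y
  · have := binomPotential_le_sub_two m r
    simp [stepBound]
    linarith
  · simp [stepBound]

theorem le_stepBound_not_add (m G r : ℕ) (y : Bool) :
    2 ^ (m + 1) * (2 * G) + binomPotential (m + 1) r ≤
      stepBound m G r y (!y) + stepBound m G r y y := by
  have := binomPotential_succ_le m r
  have := binomPotential_succ_le_two_mul m r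
  cases y <;> simp [stepBound, pow_succ] <;> linarith

theorem le_two_mul_stepBound_true_zero (m G : ℕ) :
    2 ^ (m + 1) * (2 * G) + binomPotential (m + 1) 0 ≤ 2 * stepBound m G 0 true true := by
  simp [stepBound, binomPotential_zero_right, pow_succ]
  linarith

variable {k d i : ℕ} {A : RandAlg ℕ Bool}

theorem adversary_label_eq_false_iff (tr : ATranscript ℕ Bool) :
    (adversary k d i A tr).2.1 = false ↔ cappedCount d i tr < budget k d ∧
      (A tr (adversary k d i A tr).1).map Prod.snd false ≤
        (A tr (adversary k d i A tr).1).map Prod.snd true := by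
  simp [adversary]

theorem trueCount_append (tr : ATranscript ℕ Bool) (e : Round ℕ Bool) :
    trueCount (tr ++ [e]) = trueCount tr + (revealedLabel e).toNat := by
  cases h : revealedLabel e <;> simp [trueCount, List.countP_append, h]

theorem cappedCount_append_le (tr : ATranscript ℕ Bool) (e : Round ℕ Bool) :
    cappedCount d i (tr ++ [e]) ≤ cappedCount d i tr + (falsePositive e).toNat := by
  cases hfp : falsePositive e
  · simp [cappedCount, falsePositiveCount, List.countP_append, hfp]
  · calc cappedCount d i (tr ++ [e])
        ≤ ∑ z ∈ Ico (2 ^ i) (2 ^ (i + 1)),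
            (min (falsePositiveCount z tr) d + if e.2.1 = z then 1 else 0) :=
          sum_le_sum fun z _ => by
            by_cases hz : e.2.1 = z <;>
              (simp [falsePositiveCount, List.countP_append, hfp, hz]; try omega)
      _ ≤ cappedCount d i tr + (true).toNat := by
          rw [sum_add_distrib, sum_ite_eq]
          split_ifs <;> simp [cappedCount]

theorem remaining_sub_le_remaining_append (tr : ATranscript ℕ Bool) (e : Round ℕ Bool) :
    remaining k d i tr - (2 * (falsePositive e).toNat + (revealedLabel e).toNat) ≤
      remaining k d i (tr ++ [e]) := by
  have := cappedCount_append_le (d := d) (i := i) tr e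
  simp only [remaining, trueCount_append]
  omega

theorem stepBound_le_potential {adv : Adversary ℕ Bool} (m : ℕ) (tr : ATranscript ℕ Bool)
    (q : ℕ × Bool) :
    stepBound m (mistakesA tr) (remaining k d i tr) (adv tr).2.1 q.2 ≤
      potential k d i m (tr ++ [roundEntry adv tr q]) := by
  have := remaining_sub_le_remaining_append (k := k) (d := d) (i := i) tr (roundEntry adv tr q)
  rw [falsePositive, revealedLabel_roundEntry] at this
  simp only [stepBound, potential, mistakesA_append_singleton, isSome_roundEntry]
  exact add_le_add le_rfl (binomPotential_mono m this)

theorem cappedCount_le_budget {n : ℕ} {tr : ATranscript ℕ Bool}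
    (h : tr ∈ (runPMF A (adversary k d i A) n).support) : cappedCount d i tr ≤ budget k d :=
  runPMF_support_induction A (adversary k d i A)
    (motive := fun _ tr => cappedCount d i tr ≤ budget k d)
    (by simp [cappedCount, falsePositiveCount]) (fun _ tr ih q _ => by
      have hle := cappedCount_append_le (d := d) (i := i) tr (roundEntry (adversary k d i A) tr q)
      cases hfp : falsePositive (roundEntry (adversary k d i A) tr q)
      · simp only [hfp, Bool.toNat_false, add_zero] at hle
        exact hle.trans ih
      · have hy : (adversary k d i A tr).2.1 = false :=
          (by simpa [falsePositive, revealedLabel_roundEntry] using hfp : _ ∧ _).2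
        have := ((adversary_label_eq_false_iff tr).1 hy).1
        simp only [hfp, Bool.toNat_true] at hle
        omega) h

theorem cappedCount_le_mul_trueCount (hi : 1 ≤ i) {tr : ATranscript ℕ Bool}
    (hlegal : ∀ e ∈ tr, (e.2.1, e.2.2.1) ∈ HbulSS ∪ revealedA tr) :
    cappedCount d i tr ≤ d * trueCount tr := by
  set T := ((tr.filter revealedLabel).map Prod.fst).toFinset
  have hT : T.card ≤ trueCount tr := by
    calc T.card ≤ ((tr.filter revealedLabel).map Prod.fst).length := List.toFinset_card_le _
      _ = trueCount tr := by simp [trueCount, List.countP_eq_length_filter]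
  -- an example explaining a false positive was revealed with label `1`, by legality
  have hsupp : ∀ z ∈ Ico (2 ^ i) (2 ^ (i + 1)), min (falsePositiveCount z tr) d ≠ 0 → z ∈ T := by
    intro z hz hne
    obtain ⟨e, he, hfp⟩ : ∃ e ∈ tr, (falsePositive e && decide (e.2.1 = z)) = true :=
      List.countP_pos_iff.1 (Nat.pos_of_ne_zero fun h => hne (by simp [falsePositiveCount, h]))
    simp only [falsePositive, Bool.and_eq_true, Bool.not_eq_true', decide_eq_true_eq] at hfp
    obtain ⟨⟨hyh, -⟩, rfl⟩ := hfp
    have hz1 : e.2.1 ≠ 1 := ne_one_of_mem_XiSS hi (mem_Ico.1 hz)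
    rcases hlegal e he with hH | hrev
    · simp [HbulSS, hyh, hz1] at hH
    · obtain ⟨e', he', h1, h2⟩ := mem_revealedA_iff.1 hrev
      simp only [hyh] at h2
      simp only [T, List.mem_toFinset, List.mem_map, List.mem_filter]
      exact ⟨e', ⟨he', h2⟩, h1⟩
  calc cappedCount d i tr
      = ∑ z ∈ (Ico (2 ^ i) (2 ^ (i + 1))).filter (· ∈ T), min (falsePositiveCount z tr) d :=
        (sum_filter_of_ne hsupp).symm
    _ ≤ ∑ _z ∈ (Ico (2 ^ i) (2 ^ (i + 1))).filter (· ∈ T), d :=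
        sum_le_sum fun _ _ => min_le_right _ _
    _ ≤ ∑ _z ∈ T, d := sum_le_sum_of_subset fun z hz => (mem_filter.1 hz).2
    _ = d * T.card := by rw [sum_const, smul_eq_mul, mul_comm]
    _ ≤ d * trueCount tr := Nat.mul_le_mul_left _ hT

theorem remaining_eq_zero_of_budget_le (hd : 1 ≤ d) (hi : 1 ≤ i) {tr : ATranscript ℕ Bool}
    (hlegal : ∀ e ∈ tr, (e.2.1, e.2.2.1) ∈ HbulSS ∪ revealedA tr)
    (hstuck : budget k d ≤ cappedCount d i tr) : remaining k d i tr = 0 := by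
  have hcap := hstuck.trans (cappedCount_le_mul_trueCount hi hlegal)
  have hk : k ≤ trueCount tr := by
    by_contra! hlt
    have : d * (trueCount tr + 1) ≤ d * k := Nat.mul_le_mul_left d hlt
    have h1 : (k + 1) * d = d * k + d := by ring
    have h2 : d * (trueCount tr + 1) = d * trueCount tr + d := by ring
    simp only [budget] at hcap
    omega
  simp only [remaining]
  omega

theorem potential_succ_le (hd : 1 ≤ d) (hi : 1 ≤ i) {tr : ATranscript ℕ Bool}
    (hlegal : ∀ e ∈ tr, (e.2.1, e.2.2.1) ∈ HbulSS ∪ revealedA tr) (m : ℕ) :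
    (potential k d i (m + 1) tr : ℝ≥0∞) ≤
      2 * ∑' q, A tr (adversary k d i A tr).1 q *
        potential k d i m (tr ++ [roundEntry (adversary k d i A) tr q]) := by
  refine (PMF.natCast_le_two_mul_tsum_snd _ (adversary k d i A tr).2.1
    (s := stepBound m (mistakesA tr) (remaining k d i tr) (adversary k d i A tr).2.1)
    (stepBound_le_stepBound_not ..) ?_).trans
    (by gcongr with q; exact_mod_cast stepBound_le_potential m tr q)
  by_cases hstuck : budget k d ≤ cappedCount d i tr
  · left
    have hy : (adversary k d i A tr).2.1 = true := by
      by_contra h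
      exact not_lt.2 hstuck ((adversary_label_eq_false_iff tr).1 (by simpa using h)).1
    simpa only [potential, hy, remaining_eq_zero_of_budget_le hd hi hlegal hstuck] using
      le_two_mul_stepBound_true_zero m (mistakesA tr)
  · refine .inr ⟨?_, le_stepBound_not_add ..⟩
    cases hy : (adversary k d i A tr).2.1
    · exact ((adversary_label_eq_false_iff tr).1 hy).2
    · refine (not_le.1 fun hle => ?_).le
      exact Bool.false_ne_true
        (((adversary_label_eq_false_iff tr).2 ⟨not_le.1 hstuck, hle⟩).symm.trans hy)

theorem budget_le_expMistakes (hk : 1 ≤ k) (hd : 1 ≤ d) (hi : 1 ≤ i) {L : ℕ}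
    (hL : 4 * (k + 1) * d ≤ L) (hA : LegalRand A HbulSS) :
    (budget k d : ℝ≥0∞) ≤ expMistakes A (adversary k d i A) L := by
  have hsuper := le_pow_mul_tsum_runPMF_of_step (A := A) (adv := adversary k d i A) 2
    (fun tr => 2 * mistakesA tr) (fun m tr => potential k d i m tr)
    (fun tr => by simp [potential, binomPotential_zero_left])
    (fun _ m _ htr => potential_succ_le hd hi (legal_of_mem_support_runPMF hA htr) m) L
  have hinit : 2 * budget k d * 2 ^ L ≤ potential k d i L [] := by
    have hkd : k + 1 ≤ (k + 1) * d := Nat.le_mul_of_pos_right _ hd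
    rw [mul_assoc] at hL
    simpa [potential, remaining, cappedCount, falsePositiveCount, trueCount, mistakesA] using
      two_mul_mul_two_pow_le_binomPotential (B := budget k d) hk (by simp only [budget]; omega)
  have hE : ∑' tr, runPMF A (adversary k d i A) L tr * (2 * mistakesA tr : ℝ≥0∞) =
      2 * expMistakes A (adversary k d i A) L := by
    simp_rw [expMistakes, mul_left_comm _ (2 : ℝ≥0∞), ENNReal.tsum_mul_left]
  have h2L : (2 : ℝ≥0∞) ^ L * 2 ≠ 0 := by positivity
  have h2L' : (2 : ℝ≥0∞) ^ L * 2 ≠ ⊤ := by finiteness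
  refine (ENNReal.mul_le_mul_iff_right h2L h2L').1 ?_
  calc (2 : ℝ≥0∞) ^ L * 2 * budget k d = ((2 * budget k d * 2 ^ L : ℕ) : ℝ≥0∞) := by
        push_cast; ring
    _ ≤ potential k d i L [] := by exact_mod_cast hinit
    _ ≤ 2 ^ L * (2 * expMistakes A (adversary k d i A) L) := by simpa only [hE] using hsuper
    _ = 2 ^ L * 2 * expMistakes A (adversary k d i A) L := by ring

theorem psiSS_feedback_spec (d i p : ℕ) (a : ℕ → Bool → Fin d → ZMod p) (f : ℕ → Bool)
    (x xh : ℕ) (hne : f x ≠ f xh) :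
    ∃ φ ∈ (Set.univ : Set (ℕ → Bool)),
      psiSS d i p a f x xh = some φ ∧ φ x = true ∧ φ xh = false := by
  have hx : xh ≠ x := fun h => hne (h ▸ rfl)
  by_cases hmem : x ∈ XiSS i ∧ xh ∈ XiSS i
  · have : xh < PpolySS d i p (a xh (f x)) x := hmem.2.2.trans_le (Nat.le_add_right _ _)
    exact ⟨_, trivial, if_pos hmem, by simp [ind2], by simp [ind2, hx, this.ne]⟩
  · exact ⟨_, trivial, if_neg hmem, by simp [ind1], by simp [ind1, hx]⟩

noncomputable def ssTeacher (d i p : ℕ) (a : ℕ → Bool → Fin d → ZMod p) (f : ℕ → Bool) :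
    Teacher ℕ Bool Set.univ :=
  ⟨f, psiSS d i p a f, psiSS_feedback_spec d i p a f⟩

theorem psiSS_eq_some_advFeature {p : ℕ} (a : ℕ → Bool → Fin d → ZMod p) (f : ℕ → Bool)
    (x xh : ℕ) (h : x ∈ XiSS i → xh ∈ XiSS i →
      ∑ j : Fin d, a xh (f x) j * ((x - 2 ^ i + 1 : ℕ) : ZMod p) ^ (j : ℕ) = 0) :
    psiSS d i p a f x xh = some (advFeature i x xh) := by
  unfold psiSS advFeature
  split_ifs with hmem
  · rw [PpolySS, h hmem.1 hmem.2, ZMod.val_zero, add_zero]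
  · rfl

theorem consistentH_HbulSS_of_mem_FdiSS {Φ : Set (ℕ → Bool)} {T : Teacher ℕ Bool Φ} (hi : 2 ≤ i)
    (hT : T.label ∈ FdiSS i) : ConsistentH T HbulSS := by
  rintro ⟨z, y⟩ hzy
  simp only [HbulSS, Set.mem_insert_iff, Set.mem_singleton_iff, Prod.mk.injEq] at hzy
  rcases hzy with ⟨rfl, rfl⟩ | ⟨rfl, rfl⟩
  · refine hT.2 2 (fun h2 => ?_) (by decide)
    have := h2.1
    have : 4 ≤ 2 ^ i := by simpa using Nat.pow_le_pow_right two_pos hi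
    omega
  · exact hT.1

theorem exists_secretTable {p : ℕ} [Fact p.Prime] (f : ℕ → Bool) (s : ZMod p)
    (codes : ℕ → Finset (ZMod p)) (h0 : ∀ z, 0 ∉ codes z)
    (hcard : ∀ z ∈ XiSS i, f z = true → (codes z).card < d) :
    ∃ a : ℕ → Bool → Fin d → ZMod p,
      (∀ z ∈ XiSS i, f z = true → constTerm (a z false) = s) ∧
      ∀ z y w, (y = false → f z = true → w ∈ codes z) →
        ∑ j : Fin d, a z y j * w ^ (j : ℕ) = 0 := by
  have hc : ∀ z, ∃ c : Fin d → ZMod p, z ∈ XiSS i → f z = true →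
      constTerm c = s ∧ ∀ w ∈ codes z, ∑ j : Fin d, c j * w ^ (j : ℕ) = 0 := fun z => by
    by_cases hz : z ∈ XiSS i ∧ f z = true
    · obtain ⟨c, hc⟩ :=
        exists_coeffs_eval_zero_and_eval_eq_zero (codes z) (h0 z) (hcard z hz.1 hz.2) s
      exact ⟨c, fun _ _ => hc⟩
    · exact ⟨0, fun h1 h2 => absurd ⟨h1, h2⟩ hz⟩
  choose c hc using hc
  refine ⟨fun z y => if y = false ∧ f z = true ∧ z ∈ XiSS i then c z else 0,
    fun z hz hfz => by simp [hfz, hz, (hc z hz hfz).1], fun z y w hw => ?_⟩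
  dsimp only
  split_ifs with h
  · exact (hc z h.2.2 h.2.1).2 w (hw h.1 h.2.1)
  · simp

noncomputable def ssLabel (d : ℕ) (tr : ATranscript ℕ Bool) : ℕ → Bool := fun z =>
  decide (z = 1 ∨ ((z, true) ∈ revealedA tr ∧ falsePositiveCount z tr < d))

def falsePositiveCodes (i p z : ℕ) (tr : ATranscript ℕ Bool) : Finset (ZMod p) :=
  ((tr.filter fun e => falsePositive e && decide (e.2.1 = z)).map
    fun e => ((e.1 - 2 ^ i + 1 : ℕ) : ZMod p)).toFinset

section Transcript

variable {tr : ATranscript ℕ Bool}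

theorem ssLabel_mem_FdiSS (hex : ∀ e ∈ tr, e.1 ∈ XiSS i) : ssLabel d tr ∈ FdiSS i := by
  refine ⟨by simp [ssLabel], fun z hz hz1 => ?_⟩
  simp only [ssLabel, hz1, false_or, decide_eq_false_iff_not, not_and]
  intro hrev
  obtain ⟨e, he, rfl, -⟩ := mem_revealedA_iff.1 hrev
  exact absurd (hex e he) hz

theorem ssLabel_fst_eq_revealedLabel (hnodup : (tr.map Prod.fst).Nodup) {e : Round ℕ Bool}
    (he : e ∈ tr) (he1 : e.1 ≠ 1) (hfp : falsePositiveCount e.1 tr < d) :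
    ssLabel d tr e.1 = revealedLabel e := by
  cases hl : revealedLabel e
  · simp only [ssLabel, he1, hfp, false_or, and_true, decide_eq_false_iff_not]
    intro hrev
    obtain ⟨e', he', h1, h2⟩ := mem_revealedA_iff.1 hrev
    obtain rfl := List.inj_on_of_nodup_map hnodup he' he h1
    simp [hl] at h2
  · have : (e.1, true) ∈ revealedA tr := mem_revealedA_iff.2 ⟨e, he, rfl, hl⟩
    simp [ssLabel, hfp, this]

theorem falsePositiveCount_lt_of_ssLabel {z : ℕ} (hz1 : z ≠ 1) (h : ssLabel d tr z = true) :
    falsePositiveCount z tr < d := by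
  simp only [ssLabel, hz1, false_or, decide_eq_true_eq] at h
  exact h.2

theorem card_burned_le (hd : 1 ≤ d) (hcap : cappedCount d i tr ≤ budget k d) :
    (burned d i tr).card ≤ k := by
  have h : (burned d i tr).card * d ≤ cappedCount d i tr :=
    calc (burned d i tr).card * d = ∑ z ∈ burned d i tr, min (falsePositiveCount z tr) d := by
          rw [sum_congr rfl fun z (hz : z ∈ burned d i tr) => min_eq_right (mem_filter.1 hz).2,
            sum_const, smul_eq_mul]
      _ ≤ cappedCount d i tr := sum_le_sum_of_subset (filter_subset _ _)
  have : (burned d i tr).card * d < (k + 1) * d := by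
    have : 1 ≤ (k + 1) * d := Nat.mul_pos (Nat.succ_pos k) hd
    simp only [budget] at hcap
    omega
  exact Nat.lt_succ_iff.1 (Nat.lt_of_mul_lt_mul_right this)

theorem card_falsePositiveCodes_le (i p z : ℕ) :
    (falsePositiveCodes i p z tr).card ≤ falsePositiveCount z tr :=
  (List.toFinset_card_le _).trans (by simp [falsePositiveCount, List.countP_eq_length_filter])

theorem zero_notMem_falsePositiveCodes {p L : ℕ} (hLp : L < p)
    (hex : ∀ e ∈ tr, 2 ^ i ≤ e.1 ∧ e.1 < 2 ^ i + L) (z : ℕ) :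
    (0 : ZMod p) ∉ falsePositiveCodes i p z tr := by
  simp only [falsePositiveCodes, List.mem_toFinset, List.mem_map, List.mem_filter, not_exists,
    not_and]
  intro e he h0
  have := hex e he.1
  have := Nat.le_of_dvd (by omega) ((ZMod.natCast_eq_zero_iff _ _).1 h0)
  omega

theorem mem_falsePositiveCodes {p : ℕ} {e : Round ℕ Bool} (he : e ∈ tr)
    (hfp : falsePositive e = true) :
    ((e.1 - 2 ^ i + 1 : ℕ) : ZMod p) ∈ falsePositiveCodes i p e.2.1 tr := by
  simp only [falsePositiveCodes, List.mem_toFinset, List.mem_map, List.mem_filter]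
  exact ⟨e, ⟨he, by simp [hfp]⟩, rfl⟩

theorem nodup_map_fst_of_mem_support {L : ℕ}
    (htr : tr ∈ (runPMF A (adversary k d i A) L).support) : (tr.map Prod.fst).Nodup := by
  rw [map_fst_eq_range'_of_mem_support_runPMF (fun _ => rfl) htr]
  exact List.nodup_range'

theorem fst_bounds_of_mem_support {L : ℕ} (htr : tr ∈ (runPMF A (adversary k d i A) L).support)
    {e : Round ℕ Bool} (he : e ∈ tr) :
    2 ^ i ≤ e.1 ∧ e.1 < 2 ^ i + L := by
  have hpos := map_fst_eq_range'_of_mem_support_runPMF (fun _ => rfl) htr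
  rw [length_of_mem_support_runPMF htr] at hpos
  simpa [hpos] using List.mem_map_of_mem (f := Prod.fst) he

theorem fst_mem_XiSS_of_mem_support {L : ℕ}
    (htr : tr ∈ (runPMF A (adversary k d i A) L).support) (hLi : L ≤ 2 ^ i) {e : Round ℕ Bool}
    (he : e ∈ tr) :
    e.1 ∈ XiSS i := by
  have := fst_bounds_of_mem_support htr he
  exact ⟨this.1, by rw [pow_succ]; omega⟩

theorem roundCons_ssTeacher {L p : ℕ} (htr : tr ∈ (runPMF A (adversary k d i A) L).support)
    (hi : 1 ≤ i) (hLi : L ≤ 2 ^ i)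
    (a : ℕ → Bool → Fin d → ZMod p)
    (hvanish : ∀ z y w, (y = false → ssLabel d tr z = true → w ∈ falsePositiveCodes i p z tr) →
      ∑ j : Fin d, a z y j * w ^ (j : ℕ) = 0)
    {e : Round ℕ Bool} (he : e ∈ tr) (hburned : e.1 ∉ burned d i tr) :
    RoundCons (ssTeacher d i p a (ssLabel d tr)) e := by
  have hXi := fst_mem_XiSS_of_mem_support htr hLi he
  have hfp : falsePositiveCount e.1 tr < d := by
    by_contra! h
    exact hburned (mem_filter.2 ⟨mem_Ico.2 hXi, h⟩)
  have hlabel := ssLabel_fst_eq_revealedLabel (nodup_map_fst_of_mem_support htr) he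
    (ne_one_of_mem_XiSS hi hXi) hfp
  obtain ⟨tr', q, rfl⟩ := exists_roundEntry_of_mem_support_runPMF htr e he
  rw [revealedLabel_roundEntry] at hlabel
  refine (roundCons_roundEntry_iff _ tr' q).2 ⟨hlabel, fun hmis =>
    psiSS_eq_some_advFeature a _ _ _ fun _ _ => hvanish _ _ _ fun hy _ => ?_⟩
  have hy' : (adversary k d i A tr').2.1 = false := by rw [← hlabel]; exact hy
  refine mem_falsePositiveCodes he ?_
  rw [falsePositive, revealedLabel_roundEntry, hy', Bool.not_false, Bool.and_true]
  exact (by simpa [hy'] using hmis : q.2 = true)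

theorem kConsistent_TdISS_of_mem_support {L : ℕ}
    (htr : tr ∈ (runPMF A (adversary k d i A) L).support) (hd : 1 ≤ d) (hi : 2 ≤ i) {p : ℕ}
    [Fact p.Prime]
    (b : (ℕ → Bool) → ZMod p) (hLi : L ≤ 2 ^ i) (hLp : L < p) :
    kConsistent (TdISS d i p b) HbulSS k tr := by
  have hf : ssLabel d tr ∈ FdiSS i :=
    ssLabel_mem_FdiSS fun _ he => fst_mem_XiSS_of_mem_support htr hLi he
  obtain ⟨a, hsecret, hvanish⟩ := exists_secretTable (d := d) (i := i) (ssLabel d tr)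
    (b (ssLabel d tr)) (falsePositiveCodes i p · tr)
    (zero_notMem_falsePositiveCodes hLp fun _ he => fst_bounds_of_mem_support htr he)
    fun z hz hfz => (card_falsePositiveCodes_le i p z).trans_lt
      (falsePositiveCount_lt_of_ssLabel (ne_one_of_mem_XiSS (by omega) hz) hfz)
  exact kConsistent_of_nodup (nodup_map_fst_of_mem_support htr) (T := ssTeacher d i p a _)
    ⟨_, hf, a, hsecret, rfl, rfl⟩ (consistentH_HbulSS_of_mem_FdiSS hi hf) (burned d i tr)
    (card_burned_le hd (cappedCount_le_budget htr))
    fun _ he hb => roundCons_ssTeacher htr (by omega) hLi a hvanish he hb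

end Transcript

end SecretSharing

theorem secret_sharing_lower_bound_general (k d : ℕ) (hk : 1 ≤ k) (hd : 1 ≤ d)
    (L : ℕ) (hL : 4 * (k + 1) * d ≤ L) (p : ℕ → ℕ)
    (hp : ∀ i : ℕ, (p i).Prime) (hp2 : ∀ i : ℕ, 2 ^ (2 ^ i) ≤ p i)
    (b : ∀ i : ℕ, (ℕ → Bool) → ZMod (p i))
    (A : RandAlg ℕ Bool) (hA : LegalRand A HbulSS) :
    (((k + 1) * d - 1 : ℕ) : ℝ≥0∞) ≤ MLk A (TfullSS d p b) HbulSS k L := by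
  have hLi : L < 2 ^ (L + 2) :=
    Nat.lt_two_pow_self.trans (Nat.pow_lt_pow_right one_lt_two (by omega))
  have : Fact (p (L + 2)).Prime := ⟨hp (L + 2)⟩
  have hLp : L < p (L + 2) := hLi.trans (Nat.lt_two_pow_self.trans_le (hp2 (L + 2)))
  have hadm : ∀ tr ∈ (runPMF A (SecretSharing.adversary k d (L + 2) A) L).support,
      kConsistent (TfullSS d p b) HbulSS k tr := fun _ htr =>
    (SecretSharing.kConsistent_TdISS_of_mem_support htr hd (by omega) (b (L + 2)) hLi.le hLp).mono
      (Set.subset_iUnion (fun i => TdISS d i (p i) (b i)) (L + 2))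
  calc (((k + 1) * d - 1 : ℕ) : ℝ≥0∞) = SecretSharing.budget k d := rfl
    _ ≤ expMistakes A (SecretSharing.adversary k d (L + 2) A) L :=
      SecretSharing.budget_le_expMistakes hk hd (by omega) hL hA
    _ ≤ MLk A (TfullSS d p b) HbulSS k L :=
      le_iSup₂ (f := fun adv _ => expMistakes A adv L) _ hadm

/-- **Lemma (lower bound for the secret-sharing construction).** In the
secret-sharing construction with parameter `d` (with primes
`p_i ≥ 2^{|X_i|} = 2^{2^i}` and injections `b_i` of `F^d_i` into the field of
size `p_i`): for all `k, d ≥ 1`, every `L ≥ 4(k+1)d`, and every (possibly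
randomized, legal) DFF algorithm `𝒜`, the expected worst-case mistake count
against an adaptive adversary satisfies
`M^L_k(𝒜, 𝒯^{d+1}, H_•) ≥ (k+1)d − 1`. -/
theorem secret_sharing_lower_bound (k d : ℕ) (hk : 1 ≤ k) (hd : 1 ≤ d)
    (L : ℕ) (hL : 4 * (k + 1) * d ≤ L) (p : ℕ → ℕ)
    (hp : ∀ i : ℕ, (p i).Prime) (hp2 : ∀ i : ℕ, 2 ^ (2 ^ i) ≤ p i)
    (b : ∀ i : ℕ, (ℕ → Bool) → ZMod (p i))
    (hb : ∀ i : ℕ, Set.InjOn (b i) (FdiSS i))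
    (A : RandAlg ℕ Bool) (hA : LegalRand A HbulSS) :
    (((k + 1) * d - 1 : ℕ) : ℝ≥0∞) ≤ MLk A (TfullSS d p b) HbulSS k L :=
  secret_sharing_lower_bound_general k d hk hd L hL p hp hp2 b A hA
end

section
/- For all integers n ≥ 1 and L with L ≥ 4n, the binomial tail satisfies ∑_{j=0}^{n−1} C(L,j) ≤ (3/4)^{n−1} · 2^L; equivalently, ∑_{j=0}^{n−1} C(L,j) · 2^{−L} ≤ (3/4)^{n−1}. -/
/-!
Chernoff's exponential-moment trick: for `0 ≤ x ≤ 1` and `j ≤ n - 1` we have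
`x ^ (n - 1) ≤ x ^ j`, so `x ^ (n - 1) · ∑_{j<n} C(L, j) ≤ ∑_j C(L, j) x ^ j = (1 + x) ^ L`.
With `x = 1/3` the tail is at most `3 ^ (n - 1) (4/3) ^ L`, and this is at most
`(3/4) ^ (n - 1) 2 ^ L` because `4 ^ (n - 1) ≤ ((3/2) ^ 4) ^ (n - 1) ≤ (3/2) ^ L` once `L ≥ 4n`.
-/

open Finset

section
variable {R : Type*} [CommSemiring R] [PartialOrder R] [IsOrderedRing R]

theorem sum_range_choose_mul_pow_le_add_pow {x : R} (hx : 0 ≤ x) (n L : ℕ) :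
    ∑ j ∈ range n, (L.choose j : R) * x ^ j ≤ (x + 1) ^ L := by
  calc ∑ j ∈ range n, (L.choose j : R) * x ^ j
      ≤ ∑ j ∈ range (L + 1 + n), (L.choose j : R) * x ^ j :=
        sum_le_sum_of_subset_of_nonneg (range_mono (by omega)) fun _ _ _ ↦ by positivity
    _ = ∑ j ∈ range (L + 1), (L.choose j : R) * x ^ j := by
        simp [sum_range_add, fun j ↦ Nat.choose_eq_zero_of_lt (show L < L + 1 + j by omega)]
    _ = (x + 1) ^ L := by simp [add_pow, mul_comm]

theorem pow_mul_sum_range_choose_le_add_pow {x : R} (hx₀ : 0 ≤ x) (hx₁ : x ≤ 1) (n L : ℕ) :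
    x ^ (n - 1) * ∑ j ∈ range n, (L.choose j : R) ≤ (x + 1) ^ L := by
  refine le_trans ?_ (sum_range_choose_mul_pow_le_add_pow hx₀ n L)
  rw [mul_sum]
  refine sum_le_sum fun j hj ↦ ?_
  rw [mul_comm]
  exact mul_le_mul_of_nonneg_left (pow_le_pow_of_le_one hx₀ hx₁ (by grind))
    (Nat.cast_nonneg _)
end

theorem four_pow_le_three_halves_pow {m L : ℕ} (h : 4 * m ≤ L) : (4 : ℝ) ^ m ≤ (3 / 2) ^ L :=
  calc (4 : ℝ) ^ m ≤ ((3 / 2) ^ 4) ^ m := pow_le_pow_left₀ (by norm_num) (by norm_num) m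
    _ = (3 / 2) ^ (4 * m) := (pow_mul _ _ _).symm
    _ ≤ (3 / 2) ^ L := pow_le_pow_right₀ (by norm_num) h

theorem binomial_tail_bound_general (n L : ℕ) (hL : 4 * n ≤ L) :
    (∑ j ∈ Finset.range n, (L.choose j : ℝ)) ≤
      (3 / 4 : ℝ) ^ (n - 1) * 2 ^ L := by
  have hchernoff :=
    pow_mul_sum_range_choose_le_add_pow (x := (1 / 3 : ℝ)) (by norm_num) (by norm_num) n L
  have hpow := four_pow_le_three_halves_pow (m := n - 1) (L := L) (by omega)
  calc ∑ j ∈ range n, (L.choose j : ℝ)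
      = 3 ^ (n - 1) * ((1 / 3) ^ (n - 1) * ∑ j ∈ range n, (L.choose j : ℝ)) := by
        rw [← mul_assoc, ← mul_pow]; norm_num
    _ ≤ 3 ^ (n - 1) * (4 / 3) ^ L := by norm_num at hchernoff ⊢; gcongr
    _ = (3 / 4) ^ (n - 1) * (4 ^ (n - 1) * (4 / 3) ^ L) := by rw [← mul_assoc, ← mul_pow]; norm_num
    _ ≤ (3 / 4) ^ (n - 1) * ((3 / 2) ^ L * (4 / 3) ^ L) := by gcongr
    _ = (3 / 4) ^ (n - 1) * 2 ^ L := by rw [← mul_pow]; norm_num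

/-- **Lemma (binomial tail bound).** For all integers `n ≥ 1` and `L ≥ 4n`,
the binomial tail satisfies `∑_{j=0}^{n−1} C(L, j) ≤ (3/4)^{n−1} · 2^L`;
equivalently, a `Binomial(L, 1/2)` random variable is at most `n − 1` with
probability at most `(3/4)^{n−1}`. -/
theorem binomial_tail_bound (n L : ℕ) (hn : 1 ≤ n) (hL : 4 * n ≤ L) :
    (∑ j ∈ Finset.range n, (L.choose j : ℝ)) ≤
      (3 / 4 : ℝ) ^ (n - 1) * 2 ^ L :=
  binomial_tail_bound_general n L hL
end

section
/- Consider any general interactive prediction protocol satisfying Assumption 1 (mistake indicator) and Assumption 2 (suffix property), a class 𝒯 of generalized teachers, and an initial input I. Suppose 𝒜 is an algorithm for the protocol that makes at most d mistakes on every run whose feedback has zero exceptions with respect to 𝒯. Then the restart algorithm GAA(𝒜,𝒯,I) makes at most (k+1)·d + k mistakes on every run whose feedback has at most k exceptions with respect to 𝒯. -/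
/-!
`GAA` restarts `𝒜` after every `d + 1` mistakes, so a run of it splits into completed
segments carrying `d + 1` mistakes each, followed by a current segment with at most `d`.
Each completed segment is a run of `𝒜` on its own; if all its feedbacks were consistent
with the teacher `T₀`, then `𝒜` would make at most `d` mistakes on it, so it contains an
exception. Hence at most `k` segments are completed, and there are at most
`k (d + 1) + d` mistakes.
-/

open scoped Classical

section GeneralProtocol

/- A general interactive prediction protocol: there is an initial input `I`
(of type `ι`); in each round the environment provides an example of type `X`,
the algorithm outputs a value of type `Z`, and the environment provides
feedback of type `W`.  The protocol specifies, for every initial input,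
current example and past interaction, the set of legal outputs
(`legal`), and, for every generalized teacher of type `T`, which feedbacks
are consistent with it given the round's example and output (`conforms`).
Assumption 1 (mistake indicator) is represented by a fixed Boolean function
`isM` of a round `(x, z, w)`. -/
variable {ι X Z W T : Type}

/-- An algorithm for the protocol (with the initial input fixed): a function
from the past interaction and the current example to an output. -/
abbrev ProtoAlg (X Z W : Type) : Type := List (X × Z × W) → X → Z

/-- `tr` is a run of the algorithm `alg`: each recorded output is the one
produced by `alg` from the past interaction and the current example. -/
def IsRunOf (alg : ProtoAlg X Z W) (tr : List (X × Z × W)) : Prop :=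
  ∀ (t : ℕ) (h : t < tr.length),
    (tr.get ⟨t, h⟩).2.1 = alg (tr.take t) (tr.get ⟨t, h⟩).1

/-- The run `tr` has at most `k` exceptions with respect to the teacher class
`𝒯`: outside a set of at most `k` rounds, all feedbacks are consistent with a
single teacher of `𝒯`. -/
def AtMostExc (conforms : T → X → Z → W → Prop) (𝒯 : Set T) (k : ℕ)
    (tr : List (X × Z × W)) : Prop :=
  ∃ T₀ ∈ 𝒯, ∃ E : Finset ℕ, E.card ≤ k ∧
    ∀ (t : ℕ) (h : t < tr.length), t ∉ E →
      conforms T₀ (tr.get ⟨t, h⟩).1 (tr.get ⟨t, h⟩).2.1 (tr.get ⟨t, h⟩).2.2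

/-- The running suffix of the transcript used by the restart algorithm `GAA`:
the rounds since the last restart, where a restart occurs each time the
current segment accumulates `d + 1` mistakes. -/
def gaaSuffix (d : ℕ) (isM : X × Z × W → Bool) (tr : List (X × Z × W)) :
    List (X × Z × W) :=
  tr.foldl
    (fun seg e =>
      if (seg ++ [e]).countP isM = d + 1 then [] else seg ++ [e]) []

/-- The Generic Agnostic Algorithm `GAA(𝒜, 𝒯, I)`: run `𝒜` (initialized on
`(𝒯, I)`), counting its mistakes, and re-initialize `𝒜` each time the count
reaches `d + 1`. -/
def GAA (d : ℕ) (isM : X × Z × W → Bool) (alg : ProtoAlg X Z W) :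
    ProtoAlg X Z W :=
  fun tr x => alg (gaaSuffix d isM tr) x

theorem List.countP_le_card_of_getElem_mem {α : Type*} {p : α → Bool} (l : List α)
    {E : Finset ℕ} (hE : ∀ (t : ℕ) (ht : t < l.length), p l[t] → t ∈ E) :
    l.countP p ≤ E.card := by
  induction l using List.reverseRecOn generalizing E with
  | nil => simp
  | append_singleton l a ih =>
    have hl : ∀ (t : ℕ) (ht : t < l.length), p l[t] → t ∈ E.erase l.length := fun t ht hp =>
      Finset.mem_erase.2 ⟨ht.ne, hE t (by rw [List.length_append]; omega) (by rwa [List.getElem_append_left])⟩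
    rw [List.countP_append]
    by_cases ha : p a
    · have hmem : l.length ∈ E := hE l.length (by simp) (by simpa using ha)
      have := ih hl
      rw [Finset.card_erase_of_mem hmem] at this
      have : 1 ≤ E.card := Finset.card_pos.2 ⟨_, hmem⟩
      rw [List.countP_singleton, if_pos ha]
      omega
    · simpa [ha] using (ih hl).trans Finset.card_erase_le

theorem isRunOf_append_singleton {alg : ProtoAlg X Z W} {tr : List (X × Z × W)}
    {e : X × Z × W} : IsRunOf alg (tr ++ [e]) ↔ IsRunOf alg tr ∧ e.2.1 = alg tr e.1 := by
  constructor
  · intro h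
    refine ⟨fun t ht => ?_, by simpa using h tr.length (by simp)⟩
    simpa [List.getElem_append_left ht, List.take_append_of_le_length ht.le] using
      h t (by rw [List.length_append]; omega)
  · rintro ⟨h, he⟩ t ht
    rw [List.length_append, List.length_singleton] at ht
    rcases (Nat.lt_succ_iff.1 ht).lt_or_eq with ht | rfl
    · simpa [List.getElem_append_left ht, List.take_append_of_le_length ht.le] using h t ht
    · simpa using he

theorem IsRunOf.of_append_singleton {alg : ProtoAlg X Z W} {tr : List (X × Z × W)}
    {e : X × Z × W} (h : IsRunOf alg (tr ++ [e])) : IsRunOf alg tr :=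
  (isRunOf_append_singleton.1 h).1

theorem gaaSuffix_append_singleton (d : ℕ) (isM : X × Z × W → Bool)
    (tr : List (X × Z × W)) (e : X × Z × W) :
    gaaSuffix d isM (tr ++ [e]) =
      if (gaaSuffix d isM tr ++ [e]).countP isM = d + 1 then [] else gaaSuffix d isM tr ++ [e] := by
  simp [gaaSuffix, List.foldl_append]

theorem countP_gaaSuffix_le (d : ℕ) (isM : X × Z × W → Bool) (tr : List (X × Z × W)) :
    (gaaSuffix d isM tr).countP isM ≤ d := by
  induction tr using List.reverseRecOn with
  | nil => simp [gaaSuffix]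
  | append_singleton tr e ih =>
    rw [gaaSuffix_append_singleton]
    split_ifs with hfull
    · simp
    · have : (gaaSuffix d isM tr ++ [e]).countP isM ≤ d + 1 := by
        rw [List.countP_append, List.countP_singleton]
        split <;> omega
      omega

theorem isRunOf_gaaSuffix {d : ℕ} {isM : X × Z × W → Bool} {alg : ProtoAlg X Z W}
    {tr : List (X × Z × W)} (hrun : IsRunOf (GAA d isM alg) tr) :
    IsRunOf alg (gaaSuffix d isM tr) := by
  induction tr using List.reverseRecOn with
  | nil => simp [gaaSuffix, IsRunOf]
  | append_singleton tr e ih =>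
    obtain ⟨hrun, he⟩ := isRunOf_append_singleton.1 hrun
    rw [gaaSuffix_append_singleton]
    split_ifs
    · simp [IsRunOf]
    · exact isRunOf_append_singleton.2 ⟨ih hrun, he⟩

noncomputable def numExc (conforms : T → X → Z → W → Prop) (T₀ : T) (tr : List (X × Z × W)) : ℕ :=
  tr.countP fun e => ¬conforms T₀ e.1 e.2.1 e.2.2

theorem numExc_append (conforms : T → X → Z → W → Prop) (T₀ : T) (l₁ l₂ : List (X × Z × W)) :
    numExc conforms T₀ (l₁ ++ l₂) = numExc conforms T₀ l₁ + numExc conforms T₀ l₂ :=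
  List.countP_append

theorem AtMostExc.exists_numExc_le {conforms : T → X → Z → W → Prop} {𝒯 : Set T} {k : ℕ}
    {tr : List (X × Z × W)} (h : AtMostExc conforms 𝒯 k tr) :
    ∃ T₀ ∈ 𝒯, numExc conforms T₀ tr ≤ k := by
  obtain ⟨T₀, hT₀, E, hE, hconf⟩ := h
  refine ⟨T₀, hT₀, le_trans (List.countP_le_card_of_getElem_mem tr fun t ht hexc => ?_) hE⟩
  by_contra htE
  exact absurd (hconf t ht htE) (by simpa using hexc)

theorem atMostExc_zero_of_numExc_eq_zero {conforms : T → X → Z → W → Prop} {𝒯 : Set T}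
    {T₀ : T} (hT₀ : T₀ ∈ 𝒯) {tr : List (X × Z × W)} (h : numExc conforms T₀ tr = 0) :
    AtMostExc conforms 𝒯 0 tr := by
  refine ⟨T₀, hT₀, ∅, le_rfl, fun t ht _ => ?_⟩
  have := List.countP_eq_zero.1 h _ (List.getElem_mem ht)
  simpa using this

theorem numExc_pos_of_isRunOf {conforms : T → X → Z → W → Prop} {isM : X × Z × W → Bool}
    {𝒯 : Set T} {alg : ProtoAlg X Z W} {d : ℕ}
    (hreal : ∀ tr : List (X × Z × W), IsRunOf alg tr →
      AtMostExc conforms 𝒯 0 tr → tr.countP isM ≤ d)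
    {T₀ : T} (hT₀ : T₀ ∈ 𝒯) {seg : List (X × Z × W)} (hrun : IsRunOf alg seg)
    (hmistakes : d < seg.countP isM) : 0 < numExc conforms T₀ seg :=
  Nat.pos_of_ne_zero fun h =>
    (hreal seg hrun (atMostExc_zero_of_numExc_eq_zero hT₀ h)).not_gt hmistakes

theorem exists_eq_append_gaaSuffix {conforms : T → X → Z → W → Prop}
    {isM : X × Z × W → Bool} {𝒯 : Set T} {alg : ProtoAlg X Z W} {d : ℕ}
    (hreal : ∀ tr : List (X × Z × W), IsRunOf alg tr →
      AtMostExc conforms 𝒯 0 tr → tr.countP isM ≤ d)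
    {T₀ : T} (hT₀ : T₀ ∈ 𝒯) {tr : List (X × Z × W)} (hrun : IsRunOf (GAA d isM alg) tr) :
    ∃ done, tr = done ++ gaaSuffix d isM tr ∧
      done.countP isM ≤ (d + 1) * numExc conforms T₀ done := by
  induction tr using List.reverseRecOn with
  | nil => exact ⟨[], by simp [gaaSuffix], by simp⟩
  | append_singleton tr e ih =>
    have hrun' := hrun.of_append_singleton
    obtain ⟨done, htr, hdone⟩ := ih hrun'
    rw [gaaSuffix_append_singleton]
    split_ifs with hfull
    · set seg := gaaSuffix d isM tr ++ [e]
      refine ⟨done ++ seg, by rw [List.append_nil, ← List.append_assoc, ← htr], ?_⟩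
      have hseg : 0 < numExc conforms T₀ seg := numExc_pos_of_isRunOf hreal hT₀
        (isRunOf_append_singleton.2 ⟨isRunOf_gaaSuffix hrun', (isRunOf_append_singleton.1 hrun).2⟩)
        (hfull ▸ Nat.lt_succ_self d)
      calc (done ++ seg).countP isM = done.countP isM + (d + 1) := by
            rw [List.countP_append, hfull]
        _ ≤ (d + 1) * numExc conforms T₀ done + (d + 1) * numExc conforms T₀ seg := by
            gcongr
            exact Nat.le_mul_of_pos_right _ hseg
        _ = (d + 1) * numExc conforms T₀ (done ++ seg) := by
            rw [numExc_append conforms T₀ done seg, mul_add]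
    · exact ⟨done, by rw [← List.append_assoc, ← htr], hdone⟩

theorem gaa_mistake_bound_general (conforms : T → X → Z → W → Prop) (isM : X × Z × W → Bool)
    (𝒯 : Set T)
    (alg : ProtoAlg X Z W)
    (d : ℕ)
    (hreal : ∀ tr : List (X × Z × W), IsRunOf alg tr →
      AtMostExc conforms 𝒯 0 tr → tr.countP isM ≤ d)
    (k : ℕ) :
    ∀ tr : List (X × Z × W), IsRunOf (GAA d isM alg) tr →
      AtMostExc conforms 𝒯 k tr → tr.countP isM ≤ (k + 1) * d + k := by
  intro tr hrun hexc
  obtain ⟨T₀, hT₀, hk⟩ := hexc.exists_numExc_le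
  obtain ⟨done, htr, hdone⟩ := exists_eq_append_gaaSuffix hreal hT₀ hrun
  have hlast := countP_gaaSuffix_le d isM tr
  have hexc_done : numExc conforms T₀ done ≤ k := by
    rw [htr, numExc_append] at hk
    omega
  calc tr.countP isM = done.countP isM + (gaaSuffix d isM tr).countP isM := by
        rw [htr, List.countP_append, ← htr]
    _ ≤ (d + 1) * k + d := by gcongr; exact hdone.trans (by gcongr)
    _ = (k + 1) * d + k := by ring

/-- **Theorem (mistake bound of the Generic Agnostic Algorithm).** Consider a
general interactive prediction protocol satisfying Assumption 1 (there is a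
fixed mistake indicator `isM`) and Assumption 2 (the legal outputs on a
suffix of a run are legal on the whole run), a class `𝒯` of generalized
teachers and an initial input `I`.  Suppose `𝒜` is an algorithm for the
protocol (its outputs are always legal) making at most `d` mistakes on every
run of `𝒜` with zero exceptions with respect to `𝒯`.  Then the restart
algorithm `GAA(𝒜, 𝒯, I)` makes at most `(k+1)·d + k` mistakes on every run
of it with at most `k` exceptions with respect to `𝒯`. -/
theorem gaa_mistake_bound (legal : ι → X → List (X × Z × W) → Set Z)
    (conforms : T → X → Z → W → Prop) (isM : X × Z × W → Bool)
    (𝒯 : Set T) (I : ι)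
    (hsuffix : ∀ (x : X) (past : List (X × Z × W)) (l : ℕ),
      legal I x (past.drop l) ⊆ legal I x past)
    (alg : ProtoAlg X Z W)
    (hlegal : ∀ (past : List (X × Z × W)) (x : X), alg past x ∈ legal I x past)
    (d : ℕ)
    (hreal : ∀ tr : List (X × Z × W), IsRunOf alg tr →
      AtMostExc conforms 𝒯 0 tr → tr.countP isM ≤ d)
    (k : ℕ) :
    ∀ tr : List (X × Z × W), IsRunOf (GAA d isM alg) tr →
      AtMostExc conforms 𝒯 k tr → tr.countP isM ≤ (k + 1) * d + k :=
  gaa_mistake_bound_general conforms isM 𝒯 alg d hreal k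

end GeneralProtocol
end
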